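/- With H̃^(q) the σ-row-permuted Sylvester Hadamard matrix of order q = 2^m, for every nonzero i ∈ F_2^m and every pair j₁, j₂ ∈ F_2^m with j₁ + j₂ = i (XOR), one has H̃^(q)_{i,j₁} = −H̃^(q)_{i,j₂}. -/

import Mathlib

/-!
Rows of the Sylvester matrix are characters of `F_2^m`, so
`H̃_{i, j₂ + i} = H̃_{i, j₂} · (-1)^{⟨σ(i), i⟩}`. And `⟨σ(i), i⟩ = 1`: if `k` is the top bit of `i`,
the coordinate `k` contributes `1 · 1`, those above `k` vanish in `σ(i)`, and those below
contribute `(1 - x) x = 0`.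
-/

/-- `σ` as in the construction. -/
def sigmaPerm {m : ℕ} (ω : Fin m → ZMod 2) : Fin m → ZMod 2 :=
  if h : ω = 0 then 0
  else
    let k := (Finset.univ.filter fun s => ω s ≠ 0).max' (by
      obtain ⟨s, hs⟩ : ∃ s, ω s ≠ 0 := by
        by_contra hc; push_neg at hc; exact h (funext fun s => hc s)
      exact ⟨s, Finset.mem_filter.mpr ⟨Finset.mem_univ s, hs⟩⟩)
    fun s => if s < k then 1 - ω s else if s = k then 1 else 0

/-- The Sylvester Hadamard matrix of order `2^m`, `H_{ω,ν} = (−1)^{⟨ω,ν⟩}`. -/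
def sylvester {m : ℕ} (ω ν : Fin m → ZMod 2) : ℝ :=
  (-1 : ℝ) ^ (∑ s, ω s * ν s : ZMod 2).val

/-- The row-permuted Sylvester Hadamard matrix `H̃_{ω,ν} = H_{σ(ω),ν}`. -/
def sylvesterPerm {m : ℕ} (ω ν : Fin m → ZMod 2) : ℝ :=
  sylvester (sigmaPerm ω) ν

open Matrix

lemma neg_one_pow_zmod_two_val_add {R : Type*} [Ring R] (x y : ZMod 2) :
    (-1 : R) ^ (x + y).val = (-1) ^ x.val * (-1) ^ y.val := by
  rw [ZMod.val_add, ← neg_one_pow_eq_pow_mod_two, pow_add]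

lemma sylvester_add_right {m : ℕ} (ω ν ν' : Fin m → ZMod 2) :
    sylvester ω (ν + ν') = sylvester ω ν * sylvester ω ν' := by
  simp only [sylvester, ← dotProduct.eq_1, dotProduct_add, neg_one_pow_zmod_two_val_add]

lemma sylvester_eq_neg_one_of_dotProduct_eq_one {m : ℕ} {ω ν : Fin m → ZMod 2}
    (h : ω ⬝ᵥ ν = 1) : sylvester ω ν = -1 := by
  rw [sylvester, ← dotProduct.eq_1, h, ZMod.val_one, pow_one]

lemma exists_sigmaPerm_eq_of_ne_zero {m : ℕ} {ω : Fin m → ZMod 2} (hω : ω ≠ 0) :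
    ∃ k, ω k ≠ 0 ∧
      sigmaPerm ω = fun s => if s < k then 1 - ω s else if s = k then 1 else 0 := by
  rw [sigmaPerm, dif_neg hω]
  refine ⟨_, ?_, rfl⟩
  exact (Finset.mem_filter.mp (Finset.max'_mem {s | ω s ≠ 0} _)).2

lemma sigmaPerm_dotProduct_self {m : ℕ} {ω : Fin m → ZMod 2} (hω : ω ≠ 0) :
    sigmaPerm ω ⬝ᵥ ω = 1 := by
  obtain ⟨k, hk₀, hσ⟩ := exists_sigmaPerm_eq_of_ne_zero hω
  have hk : ω k = 1 := Fin.eq_one_of_ne_zero (ω k) hk₀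
  rw [hσ, dotProduct, Finset.sum_eq_single k (fun s _ hsk => ?_) (by simp)]
  · simp [hk]
  have hidem : ∀ x : ZMod 2, (1 - x) * x = 0 := by decide
  split_ifs
  · exact hidem (ω s)
  · exact zero_mul (ω s)

theorem sylvesterPerm_antisymmetric (m : ℕ) (i : Fin m → ZMod 2) (hi : i ≠ 0)
    (j₁ j₂ : Fin m → ZMod 2) (h : j₁ + j₂ = i) :
    sylvesterPerm i j₁ = - sylvesterPerm i j₂ := by
  have hj₁ : j₁ = j₂ + i := by
    have hneg : -j₂ = j₂ := funext fun s => ZMod.neg_eq_self_mod_two (j₂ s)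
    rw [eq_add_neg_of_add_eq h, hneg, add_comm]
  rw [sylvesterPerm, sylvesterPerm, hj₁, sylvester_add_right,
    sylvester_eq_neg_one_of_dotProduct_eq_one (sigmaPerm_dotProduct_self hi), mul_neg_one]
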